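/- arXiv:1306.1329 — 3 statements merged into one kernel-verified Lean document; each statement's English description precedes it below -/
import Mathlib

section
/- Let f:(0,1)→(0,∞) be nondecreasing with lim_{x→0+} f(x)=0, and suppose there exist sequences 0 < a_n < b_n ≤ 1 with a_n/b_n → 0 and f(a_n)/f(b_n) → 1. Then for every t∈(0,1), limsup_{x→0+} f(xt)/f(x) = 1; in particular f is not positively increasing. -/
/-!
Monotonicity gives `f (x t) ≤ f x` near `0`, so the limsup is at most `1`. Conversely,
`f aₙ → 0` and `f aₙ / f bₙ → 1` force `f bₙ → 0`, hence `bₙ → 0`; and as soon as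
`aₙ ≤ t bₙ`, monotonicity squeezes `f aₙ / f bₙ ≤ f (bₙ t) / f bₙ ≤ 1`, so the ratio
`f (x t) / f x` tends to `1` along `x = bₙ → 0`.
-/

open Filter Set Topology

lemma mul_mem_Ioo_zero_one {x t : ℝ} (hx : x ∈ Ioo (0 : ℝ) 1) (ht : t ∈ Ioo (0 : ℝ) 1) :
    x * t ∈ Ioo (0 : ℝ) 1 :=
  ⟨mul_pos hx.1 ht.1, (mul_lt_of_lt_one_right hx.1 ht.2).trans hx.2⟩

lemma tendsto_zero_of_div_tendsto_ne_zero {α G₀ : Type*} [CommGroupWithZero G₀]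
    [TopologicalSpace G₀] [ContinuousInv₀ G₀] [ContinuousMul G₀] [T1Space G₀]
    {l : Filter α} {u v : α → G₀} {c : G₀} (hu : Tendsto u l (𝓝 0))
    (huv : Tendsto (u / v) l (𝓝 c)) (hc : c ≠ 0) : Tendsto v l (𝓝 0) := by
  have hlim : Tendsto (u / (u / v)) l (𝓝 (0 / c)) := hu.div huv hc
  rw [zero_div] at hlim
  refine hlim.congr' ((huv.eventually_ne hc).mono fun n hn => ?_)
  exact div_div_cancel₀ (div_ne_zero_iff.1 hn).1

lemma tendsto_nhdsGT_zero_of_div_tendsto_zero {α : Type*} {l : Filter α} {a b : α → ℝ}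
    (ha : ∀ n, 0 < a n) (hb : ∀ n, b n ∈ Ioc (0 : ℝ) 1)
    (hab : Tendsto (fun n => a n / b n) l (𝓝 0)) : Tendsto a l (𝓝[>] 0) := by
  refine tendsto_nhdsWithin_iff.2 ⟨?_, Eventually.of_forall ha⟩
  exact tendsto_of_tendsto_of_tendsto_of_le_of_le tendsto_const_nhds hab
    (fun n => (ha n).le) (fun n => le_div_self (ha n).le (hb n).1 (hb n).2)

lemma eventually_ne_of_div_tendsto_one {α : Type*} {l : Filter α} {f : ℝ → ℝ} {a b : α → ℝ}
    (hfa : Tendsto (fun n => f (a n)) l (𝓝 0))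
    (hfab : Tendsto (fun n => f (a n) / f (b n)) l (𝓝 1)) (y : ℝ) : ∀ᶠ n in l, b n ≠ y := by
  have hfay : Tendsto (fun n => f (a n) / f y) l (𝓝 0) := by
    simpa using hfa.div_const (f y)
  filter_upwards [hfab.eventually (lt_mem_nhds one_half_lt_one),
    hfay.eventually (gt_mem_nhds one_half_pos)] with n hbig hsmall hby
  rw [hby] at hbig
  linarith

lemma tendsto_nhdsGT_zero_of_apply_tendsto_zero {α : Type*} {l : Filter α} {f : ℝ → ℝ}
    {b : α → ℝ} (hmono : MonotoneOn f (Ioo 0 1)) (hpos : ∀ x ∈ Ioo (0 : ℝ) 1, 0 < f x)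
    (hb : ∀ᶠ n in l, b n ∈ Ioo (0 : ℝ) 1) (hfb : Tendsto (fun n => f (b n)) l (𝓝 0)) :
    Tendsto b l (𝓝[>] 0) := by
  refine tendsto_nhdsWithin_iff.2 ⟨tendsto_order.2 ⟨fun ε hε => ?_, fun ε hε => ?_⟩,
    hb.mono fun n hn => hn.1⟩
  · exact hb.mono fun n hn => hε.trans hn.1
  · have hc : min ε (1 / 2) ∈ Ioo (0 : ℝ) 1 := ⟨lt_min hε one_half_pos, by norm_num⟩
    filter_upwards [hb, hfb.eventually (gt_mem_nhds (hpos _ hc))] with n hbn hfbn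
    exact (hmono.reflect_lt hbn hc hfbn).trans_le (min_le_left _ _)

section Ratio

variable {f : ℝ → ℝ} {t : ℝ}

lemma div_apply_mul_le_one (hmono : MonotoneOn f (Ioo 0 1))
    (hpos : ∀ x ∈ Ioo (0 : ℝ) 1, 0 < f x) (ht : t ∈ Ioo (0 : ℝ) 1) {x : ℝ}
    (hx : x ∈ Ioo (0 : ℝ) 1) : f (x * t) / f x ≤ 1 :=
  div_le_one_of_le₀ (hmono (mul_mem_Ioo_zero_one hx ht) hx
    (mul_le_of_le_one_right hx.1.le ht.2.le)) (hpos x hx).le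

lemma eventually_div_apply_mul_le_one (hmono : MonotoneOn f (Ioo 0 1))
    (hpos : ∀ x ∈ Ioo (0 : ℝ) 1, 0 < f x) (ht : t ∈ Ioo (0 : ℝ) 1) :
    ∀ᶠ x in 𝓝[>] 0, f (x * t) / f x ≤ 1 :=
  mem_of_superset (Ioo_mem_nhdsGT one_pos) fun _ hx => div_apply_mul_le_one hmono hpos ht hx

lemma limsup_div_apply_mul_le_one (hmono : MonotoneOn f (Ioo 0 1))
    (hpos : ∀ x ∈ Ioo (0 : ℝ) 1, 0 < f x) (ht : t ∈ Ioo (0 : ℝ) 1) :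
    limsup (fun x => f (x * t) / f x) (𝓝[>] 0) ≤ 1 := by
  have hnonneg : ∀ᶠ x in 𝓝[>] (0 : ℝ), 0 ≤ f (x * t) / f x :=
    mem_of_superset (Ioo_mem_nhdsGT one_pos) fun x hx =>
      div_nonneg (hpos _ (mul_mem_Ioo_zero_one hx ht)).le (hpos x hx).le
  exact limsup_le_of_le (isCoboundedUnder_le_of_eventually_le _ hnonneg)
    (eventually_div_apply_mul_le_one hmono hpos ht)

lemma tendsto_div_apply_mul_of_div_tendsto_one {a b : ℕ → ℝ} (hmono : MonotoneOn f (Ioo 0 1))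
    (hpos : ∀ x ∈ Ioo (0 : ℝ) 1, 0 < f x) (ht : t ∈ Ioo (0 : ℝ) 1) (ha : ∀ n, 0 < a n)
    (hb : ∀ᶠ n in atTop, b n ∈ Ioo (0 : ℝ) 1)
    (hab : Tendsto (fun n => a n / b n) atTop (𝓝 0))
    (hfab : Tendsto (fun n => f (a n) / f (b n)) atTop (𝓝 1)) :
    Tendsto (fun n => f (b n * t) / f (b n)) atTop (𝓝 1) := by
  refine tendsto_of_tendsto_of_tendsto_of_le_of_le' hfab tendsto_const_nhds ?_
    (hb.mono fun n hn => div_apply_mul_le_one hmono hpos ht hn)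
  filter_upwards [hb, hab.eventually (gt_mem_nhds ht.1)] with n hbn habn
  have hbtn := mul_mem_Ioo_zero_one hbn ht
  have hlt : a n < b n * t := by rw [div_lt_iff₀ hbn.1] at habn; linarith
  gcongr
  · exact (hpos _ hbn).le
  · exact hmono ⟨ha n, hlt.trans hbtn.2⟩ hbtn hlt.le

lemma limsup_div_apply_mul_eq_one {a b : ℕ → ℝ} (hmono : MonotoneOn f (Ioo 0 1))
    (hpos : ∀ x ∈ Ioo (0 : ℝ) 1, 0 < f x) (ht : t ∈ Ioo (0 : ℝ) 1) (ha : ∀ n, 0 < a n)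
    (hb : Tendsto b atTop (𝓝[>] 0)) (hab : Tendsto (fun n => a n / b n) atTop (𝓝 0))
    (hfab : Tendsto (fun n => f (a n) / f (b n)) atTop (𝓝 1)) :
    limsup (fun x => f (x * t) / f x) (𝓝[>] 0) = 1 := by
  have hratio := tendsto_div_apply_mul_of_div_tendsto_one hmono hpos ht ha
    (hb (Ioo_mem_nhdsGT one_pos)) hab hfab
  refine le_antisymm (limsup_div_apply_mul_le_one hmono hpos ht) ?_
  calc (1 : ℝ) = limsup ((fun x => f (x * t) / f x) ∘ b) atTop := hratio.limsup_eq.symm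
    _ ≤ limsup (fun x => f (x * t) / f x) (𝓝[>] 0) :=
      hb.limsup_comp_le_limsup hratio.isCoboundedUnder_le
        (isBoundedUnder_of_eventually_le (eventually_div_apply_mul_le_one hmono hpos ht))

end Ratio

/-- If there are sequences with `aₙ/bₙ → 0` and `f aₙ / f bₙ → 1`, then
`limsup_{x→0+} f(xt)/f(x) = 1` for every `t ∈ (0,1)`; in particular `f` is not
positively increasing. -/
theorem stmt_4 (f : ℝ → ℝ)
    (hmono : MonotoneOn f (Ioo 0 1))
    (hpos : ∀ x ∈ Ioo (0:ℝ) 1, 0 < f x)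
    (hlim : Tendsto f (nhdsWithin 0 (Ioi 0)) (nhds 0))
    (h : ∃ a b : ℕ → ℝ, (∀ n, 0 < a n ∧ a n < b n ∧ b n ≤ 1) ∧
      Tendsto (fun n => a n / b n) atTop (nhds 0) ∧
      Tendsto (fun n => f (a n) / f (b n)) atTop (nhds 1)) :
    (∀ t ∈ Ioo (0:ℝ) 1,
      Filter.limsup (fun x => f (x * t) / f x) (nhdsWithin 0 (Ioi 0)) = 1) ∧
    ¬ ∃ t ∈ Ioo (0:ℝ) 1,
      Filter.limsup (fun x => f (x * t) / f x) (nhdsWithin 0 (Ioi 0)) < 1 := by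
  obtain ⟨a, b, hab, hab0, hfab⟩ := h
  have ha : ∀ n, 0 < a n := fun n => (hab n).1
  have hb_pos : ∀ n, 0 < b n := fun n => (ha n).trans (hab n).2.1
  have hfa : Tendsto (fun n => f (a n)) atTop (𝓝 0) :=
    hlim.comp (tendsto_nhdsGT_zero_of_div_tendsto_zero ha
      (fun n => ⟨hb_pos n, (hab n).2.2⟩) hab0)
  have hb_mem : ∀ᶠ n in atTop, b n ∈ Ioo (0 : ℝ) 1 :=
    (eventually_ne_of_div_tendsto_one hfa hfab 1).mono fun n hn =>
      ⟨hb_pos n, (hab n).2.2.lt_of_ne hn⟩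
  have hb : Tendsto b atTop (𝓝[>] 0) :=
    tendsto_nhdsGT_zero_of_apply_tendsto_zero hmono hpos hb_mem
      (tendsto_zero_of_div_tendsto_ne_zero hfa hfab one_ne_zero)
  have hlimsup : ∀ t ∈ Ioo (0 : ℝ) 1, limsup (fun x => f (x * t) / f x) (𝓝[>] 0) = 1 :=
    fun t ht => limsup_div_apply_mul_eq_one hmono hpos ht ha hb hab0 hfab
  exact ⟨hlimsup, fun ⟨t, ht, hlt⟩ => (hlimsup t ht).not_lt hlt⟩
end

section
/- Let r∈L¹[-1,1] be weakly odd-dominated with function ρ as in the definition. Then I⁺(x)=∫₀^x |r| dt satisfies the condition (API+) (there exists t∈(0,1) with I⁺(xt) ≤ (1/2) I⁺(x) for all x∈(0,1)) if and only if I⁺_o(x)=∫₀^x r^o dt satisfies (API+). -/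
/-!
Write `r = rᵒ + rᵉ`. On `(0, 1)` the sign condition gives `|r| = r`, so
`I⁺ - I⁺ₒ = ∫₀ˣ rᵉ`, and weak odd-domination bounds this by `ρ(1) I⁺ₒ`. Hence
`(1 - ρ(1)) I⁺ₒ ≤ I⁺ ≤ (1 + ρ(1)) I⁺ₒ`. Condition (API+) survives such a two-sided comparison:
iterating it replaces the constant `1/2` by `2⁻ⁿ`, which absorbs the ratio of the two comparison
constants.
-/

open Set MeasureTheory intervalIntegral

lemma mul_pow_mem_Ioo {x t : ℝ} (hx : x ∈ Ioo (0:ℝ) 1) (ht : t ∈ Ioo (0:ℝ) 1) (n : ℕ) :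
    x * t ^ n ∈ Ioo (0:ℝ) 1 :=
  ⟨mul_pos hx.1 (pow_pos ht.1 n),
    mul_lt_one_of_nonneg_of_lt_one_left hx.1.le hx.2 (pow_le_one₀ ht.1.le ht.2.le)⟩

def APIPlus (C : ℝ) (F : ℝ → ℝ) : Prop :=
  ∃ t ∈ Ioo (0:ℝ) 1, ∀ x ∈ Ioo (0:ℝ) 1, F (x * t) ≤ C * F x

namespace APIPlus

variable {C C' a b : ℝ} {f g : ℝ → ℝ}

lemma pow (hC : 0 ≤ C) (h : APIPlus C f) {n : ℕ} (hn : n ≠ 0) : APIPlus (C ^ n) f := by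
  obtain ⟨t, ht, hstep⟩ := h
  refine ⟨t ^ n, ⟨pow_pos ht.1 n, pow_lt_one₀ ht.1.le ht.2 hn⟩, fun x hx => ?_⟩
  clear hn
  induction n with
  | zero => simp
  | succ n ih =>
    calc f (x * t ^ (n + 1)) = f (x * t ^ n * t) := by rw [pow_succ, mul_assoc]
      _ ≤ C * f (x * t ^ n) := hstep _ (mul_pow_mem_Ioo hx ht n)
      _ ≤ C * (C ^ n * f x) := mul_le_mul_of_nonneg_left ih hC
      _ = C ^ (n + 1) * f x := by ring

lemma mono (hf : ∀ x ∈ Ioo (0:ℝ) 1, 0 ≤ f x) (hCC' : C ≤ C') (h : APIPlus C f) :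
    APIPlus C' f := by
  obtain ⟨t, ht, hstep⟩ := h
  exact ⟨t, ht, fun x hx => (hstep x hx).trans (mul_le_mul_of_nonneg_right hCC' (hf x hx))⟩

lemma of_lt_one (hf : ∀ x ∈ Ioo (0:ℝ) 1, 0 ≤ f x) (hC0 : 0 ≤ C) (hC1 : C < 1) (hC' : 0 < C')
    (h : APIPlus C f) : APIPlus C' f := by
  obtain ⟨n, hn⟩ := exists_pow_lt_of_lt_one hC' hC1
  refine (h.pow hC0 n.succ_ne_zero).mono hf ?_
  exact (pow_le_pow_of_le_one hC0 hC1.le n.le_succ).trans hn.le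

lemma of_bounds (ha : 0 < a) (hC : 0 ≤ C) (hlow : ∀ x ∈ Ioo (0:ℝ) 1, a * g x ≤ f x)
    (hup : ∀ x ∈ Ioo (0:ℝ) 1, f x ≤ b * g x) (h : APIPlus C f) : APIPlus (C * b / a) g := by
  obtain ⟨t, ht, hstep⟩ := h
  refine ⟨t, ht, fun x hx => ?_⟩
  have hxt : x * t ∈ Ioo (0:ℝ) 1 := by simpa using mul_pow_mem_Ioo hx ht 1
  calc g (x * t) ≤ f (x * t) / a := by rw [le_div_iff₀' ha]; exact hlow _ hxt
    _ ≤ C * f x / a := by gcongr; exact hstep x hx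
    _ ≤ C * (b * g x) / a := by gcongr; exact hup x hx
    _ = C * b / a * g x := by ring

lemma of_comparable (hg : ∀ x ∈ Ioo (0:ℝ) 1, 0 ≤ g x) (ha : 0 < a) (hab : a ≤ b)
    (hlow : ∀ x ∈ Ioo (0:ℝ) 1, a * g x ≤ f x) (hup : ∀ x ∈ Ioo (0:ℝ) 1, f x ≤ b * g x)
    (hC0 : 0 ≤ C) (hC1 : C < 1) (hC' : 0 < C') (h : APIPlus C f) : APIPlus C' g := by
  have hb : 0 < b := ha.trans_le hab
  have hf : ∀ x ∈ Ioo (0:ℝ) 1, 0 ≤ f x := fun x hx =>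
    (mul_nonneg ha.le (hg x hx)).trans (hlow x hx)
  have h' := (h.of_lt_one hf hC0 hC1 (by positivity : 0 < C' * a / b)).of_bounds ha
    (by positivity) hlow hup
  rwa [div_mul_cancel₀ _ hb.ne', mul_div_cancel_right₀ _ ha.ne'] at h'

end APIPlus

lemma apiPlus_iff_of_comparable {C a b : ℝ} {f g : ℝ → ℝ} (hg : ∀ x ∈ Ioo (0:ℝ) 1, 0 ≤ g x)
    (ha : 0 < a) (hab : a ≤ b) (hlow : ∀ x ∈ Ioo (0:ℝ) 1, a * g x ≤ f x)
    (hup : ∀ x ∈ Ioo (0:ℝ) 1, f x ≤ b * g x) (hC0 : 0 < C) (hC1 : C < 1) :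
    APIPlus C f ↔ APIPlus C g := by
  have hb : 0 < b := ha.trans_le hab
  have hf : ∀ x ∈ Ioo (0:ℝ) 1, 0 ≤ f x := fun x hx =>
    (mul_nonneg ha.le (hg x hx)).trans (hlow x hx)
  refine ⟨.of_comparable hg ha hab hlow hup hC0.le hC1 hC0,
    .of_comparable hf (inv_pos.2 hb) (inv_anti₀ ha hab) (fun x hx => ?_) (fun x hx => ?_)
      hC0.le hC1 hC0⟩
  · rw [inv_mul_le_iff₀ hb]; exact hup x hx
  · rw [le_inv_mul_iff₀ ha]; exact hlow x hx

noncomputable def oddPart (r : ℝ → ℝ) (t : ℝ) : ℝ := (r t - r (-t)) / 2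

noncomputable def evenPart (r : ℝ → ℝ) (t : ℝ) : ℝ := (r t + r (-t)) / 2

section Weight

variable {r : ℝ → ℝ}

lemma integral_abs_eq_integral_of_ae_pos {x : ℝ} (hx : 0 ≤ x)
    (h : ∀ᵐ s ∂volume.restrict (Ioc 0 x), 0 < r s) :
    ∫ s in (0:ℝ)..x, |r s| = ∫ s in (0:ℝ)..x, r s := by
  rw [integral_of_le hx, integral_of_le hx]
  exact integral_congr_ae (h.mono fun s hs => abs_of_pos hs)

lemma integral_eq_integral_oddPart_add_integral_evenPart {a b : ℝ}
    (hr : IntervalIntegrable r volume a b)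
    (hr' : IntervalIntegrable (fun s => r (-s)) volume a b) :
    ∫ s in a..b, r s = (∫ s in a..b, oddPart r s) + ∫ s in a..b, evenPart r s := by
  have hodd : IntervalIntegrable (oddPart r) volume a b := (hr.sub hr').div_const 2
  have heven : IntervalIntegrable (evenPart r) volume a b := (hr.add hr').div_const 2
  rw [← integral_add hodd heven]
  congr 1 with s
  simp only [oddPart, evenPart]
  ring

lemma ae_restrict_Ioc_pos_of_ae_mul_pos {x : ℝ} (hx : x ≤ 1)
    (hsgn : ∀ᵐ s ∂(volume.restrict (Icc (-1:ℝ) 1)), 0 < s * r s) :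
    ∀ᵐ s ∂volume.restrict (Ioc 0 x), 0 < r s := by
  have hsub : Ioc 0 x ⊆ Icc (-1:ℝ) 1 := fun s hs => ⟨by linarith [hs.1], hs.2.trans hx⟩
  filter_upwards [ae_restrict_of_ae_restrict_of_subset hsub hsgn,
    ae_restrict_mem measurableSet_Ioc] with s hs hmem
  exact pos_of_mul_pos_right hs hmem.1.le

lemma abs_integral_abs_sub_integral_oddPart_le {c x : ℝ} (hint : IntegrableOn r (Icc (-1) 1))
    (hsgn : ∀ᵐ s ∂(volume.restrict (Icc (-1:ℝ) 1)), 0 < s * r s) (hx : x ∈ Icc (0:ℝ) 1)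
    (hdom : ∫ s in (0:ℝ)..x, |evenPart r s| ≤ c * ∫ s in (0:ℝ)..x, oddPart r s) :
    |(∫ s in (0:ℝ)..x, |r s|) - ∫ s in (0:ℝ)..x, oddPart r s| ≤
      c * ∫ s in (0:ℝ)..x, oddPart r s := by
  have h0 : (0:ℝ) ∈ Icc (-1) 1 := ⟨by norm_num, by norm_num⟩
  have hr : IntervalIntegrable r volume 0 x :=
    (hint.mono_set (uIcc_subset_Icc h0 ⟨by linarith [hx.1], hx.2⟩)).intervalIntegrable
  have hr' : IntervalIntegrable (fun s => r (-s)) volume 0 x := by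
    have := (hint.mono_set (uIcc_subset_Icc h0 ⟨by linarith [hx.2], by linarith [hx.1]⟩)
      ).intervalIntegrable (a := 0) (b := -x)
    simpa using (IntervalIntegrable.iff_comp_neg).mp this
  rw [integral_abs_eq_integral_of_ae_pos hx.1 (ae_restrict_Ioc_pos_of_ae_mul_pos hx.2 hsgn),
    integral_eq_integral_oddPart_add_integral_evenPart hr hr', add_sub_cancel_left]
  exact (abs_integral_le_integral_abs hx.1).trans hdom

end Weight

/-- For a weakly odd-dominated weight, `I⁺` satisfies (API+) iff `I⁺ₒ` satisfies (API+). -/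
theorem stmt_9 (r : ℝ → ℝ) (ρ : ℝ → ℝ)
    (hint : IntegrableOn r (Icc (-1) 1))
    (hsgn : ∀ᵐ x ∂(volume.restrict (Icc (-1:ℝ) 1)), 0 < x * r x)
    (hρ : ∀ ε ∈ Icc (0:ℝ) 1, ρ ε ∈ Ico (0:ℝ) 1)
    (hdom : ∀ ε ∈ Icc (0:ℝ) 1, ∀ x ∈ Icc (0:ℝ) ε,
      (∫ t in (0:ℝ)..x, |(r t + r (-t)) / 2|) ≤ ρ ε * ∫ t in (0:ℝ)..x, (r t - r (-t)) / 2) :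
    ((∃ t ∈ Ioo (0:ℝ) 1, ∀ x ∈ Ioo (0:ℝ) 1,
        (∫ s in (0:ℝ)..(x * t), |r s|) ≤ (1 / 2) * ∫ s in (0:ℝ)..x, |r s|) ↔
      (∃ t ∈ Ioo (0:ℝ) 1, ∀ x ∈ Ioo (0:ℝ) 1,
        (∫ s in (0:ℝ)..(x * t), (r s - r (-s)) / 2) ≤
          (1 / 2) * ∫ s in (0:ℝ)..x, (r s - r (-s)) / 2)) := by
  have h1 : (1:ℝ) ∈ Icc 0 1 := ⟨zero_le_one, le_rfl⟩
  obtain ⟨hρ0, hρ1⟩ := hρ 1 h1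
  have hcomp : ∀ x ∈ Ioo (0:ℝ) 1, |(∫ s in (0:ℝ)..x, |r s|) - ∫ s in (0:ℝ)..x, oddPart r s| ≤
      ρ 1 * ∫ s in (0:ℝ)..x, oddPart r s := fun x hx =>
    abs_integral_abs_sub_integral_oddPart_le hint hsgn ⟨hx.1.le, hx.2.le⟩
      (hdom 1 h1 x ⟨hx.1.le, hx.2.le⟩)
  have hodd : ∀ x ∈ Ioo (0:ℝ) 1, 0 ≤ ∫ s in (0:ℝ)..x, oddPart r s := fun x hx => by
    have : 0 ≤ ∫ s in (0:ℝ)..x, |r s| := integral_nonneg hx.1.le fun s _ => abs_nonneg (r s)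
    nlinarith [abs_le.mp (hcomp x hx)]
  exact apiPlus_iff_of_comparable (f := fun x => ∫ s in (0:ℝ)..x, |r s|)
    (g := fun x => ∫ s in (0:ℝ)..x, oddPart r s) (a := 1 - ρ 1) (b := 1 + ρ 1) hodd
    (by linarith) (by linarith) (fun x hx => by linarith [(abs_le.mp (hcomp x hx)).1])
    (fun x hx => by linarith [(abs_le.mp (hcomp x hx)).2]) one_half_pos one_half_lt_one
end

section
/- Let r(x) = π/((1-x) log²((1-x)/e)) for x∈(0,1). Then ∫₀^1 r(t) dt = π, and the function I₁⁻(x) = ∫_{1-x}^1 r dt = π/(1 - log x) satisfies lim_{x→0+} I₁⁻(xt)/I₁⁻(x) = 1 for every t∈(0,1); hence I₁⁻ is not positively increasing. -/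
/-!
Substituting `u = 1 - t` turns `r` into `π / (u (log u - 1)²)`, the derivative of
`π / (1 - log u)`, and this primitive tends to `0` as `u → 0⁺`; this gives both integrals.
Since `1 - log (x t) = (1 - log x) - log t` and `1 - log x → ∞`, the ratio
`I₁⁻(x t) / I₁⁻(x)` tends to `1`, so its limsup cannot be `< 1`.
-/

open Filter Set MeasureTheory intervalIntegral Real Topology

lemma tendsto_div_add_const_of_tendsto_atTop {α : Type*} {l : Filter α} {f : α → ℝ}
    (hf : Tendsto f l atTop) (c : ℝ) : Tendsto (fun a => f a / (f a + c)) l (𝓝 1) := by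
  have hc : Tendsto (fun a => c / f a) l (𝓝 0) := tendsto_const_nhds.div_atTop hf
  have hinv : Tendsto (fun a => (1 + c / f a)⁻¹) l (𝓝 1) := by
    simpa using (tendsto_const_nhds.add hc).inv₀ (by norm_num : (1 : ℝ) + 0 ≠ 0)
  refine hinv.congr' ?_
  filter_upwards [hf.eventually_gt_atTop 0] with a ha
  field_simp

/-- `I₁⁻`, extended to `x ≤ 0` by its limit at `0`. -/
noncomputable def massNearOne (x : ℝ) : ℝ :=
  if 0 < x then π / (1 - log x) else 0

lemma massNearOne_of_pos {x : ℝ} (hx : 0 < x) : massNearOne x = π / (1 - log x) :=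
  if_pos hx

lemma massNearOne_zero : massNearOne 0 = 0 :=
  if_neg (lt_irrefl 0)

lemma tendsto_one_sub_log_nhdsGT_zero : Tendsto (fun x => 1 - log x) (𝓝[>] 0) atTop :=
  tendsto_atTop_add_const_left _ 1 (tendsto_neg_atBot_atTop.comp tendsto_log_nhdsGT_zero)

lemma tendsto_massNearOne_nhdsGT_zero : Tendsto massNearOne (𝓝[>] 0) (𝓝 0) := by
  refine (tendsto_one_sub_log_nhdsGT_zero.const_div_atTop π).congr' ?_
  filter_upwards [self_mem_nhdsWithin] with x hx
  exact (massNearOne_of_pos hx).symm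

lemma hasDerivAt_massNearOne {x : ℝ} (hx : 0 < x) (hxe : x ≠ exp 1) :
    HasDerivAt massNearOne (π / (x * log (x / exp 1) ^ 2)) x := by
  have hlog : 1 - log x ≠ 0 := by
    intro h
    exact hxe (by rw [← exp_log hx, show log x = 1 by linarith])
  have hderiv : HasDerivAt (fun y => π * (1 - log y)⁻¹) (π / (x * log (x / exp 1) ^ 2)) x := by
    refine ((((hasDerivAt_log hx.ne').const_sub 1).inv hlog).const_mul π).congr_deriv ?_
    rw [log_div hx.ne' (exp_ne_zero 1), log_exp, ← neg_sub, neg_sq]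
    field_simp
  refine hderiv.congr_of_eventuallyEq ?_
  filter_upwards [lt_mem_nhds hx] with y hy
  rw [massNearOne_of_pos hy, div_eq_mul_inv]

lemma continuousOn_massNearOne : ContinuousOn massNearOne (Ico 0 (exp 1)) := by
  rintro x ⟨hx0, hxe⟩
  rcases hx0.eq_or_lt with rfl | hx0
  · have : ContinuousWithinAt massNearOne (Ioi 0) 0 := by
      rw [ContinuousWithinAt, massNearOne_zero]
      exact tendsto_massNearOne_nhdsGT_zero
    exact (continuousWithinAt_Ioi_iff_Ici.mp this).mono Ico_subset_Ici_self
  · exact (hasDerivAt_massNearOne hx0 hxe.ne).continuousAt.continuousWithinAt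

lemma integral_eq_massNearOne {x : ℝ} (hx0 : 0 ≤ x) (hxe : x < exp 1) :
    ∫ u in (0 : ℝ)..x, π / (u * log (u / exp 1) ^ 2) = massNearOne x := by
  have hcont : ContinuousOn massNearOne (Icc 0 x) :=
    continuousOn_massNearOne.mono fun u hu => ⟨hu.1, hu.2.trans_lt hxe⟩
  have hderiv : ∀ u ∈ Ioo 0 x, HasDerivAt massNearOne (π / (u * log (u / exp 1) ^ 2)) u :=
    fun u hu => hasDerivAt_massNearOne hu.1 (hu.2.trans hxe).ne
  have hint : IntervalIntegrable (fun u => π / (u * log (u / exp 1) ^ 2)) volume 0 x := by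
    refine intervalIntegrable_deriv_of_nonneg (g := massNearOne) ?_ ?_ ?_ <;>
      simp only [uIcc_of_le hx0, min_eq_left hx0, max_eq_right hx0]
    · exact hcont
    · exact hderiv
    · intro u hu
      have := hu.1
      positivity
  rw [integral_eq_sub_of_hasDerivAt_of_le hx0 hcont hderiv hint, massNearOne_zero, sub_zero]

lemma integral_one_sub_eq_massNearOne {x : ℝ} (hx0 : 0 ≤ x) (hxe : x < exp 1) :
    ∫ t in (1 - x)..1, π / ((1 - t) * log ((1 - t) / exp 1) ^ 2) = massNearOne x := by
  rw [integral_comp_sub_left (fun u => π / (u * log (u / exp 1) ^ 2)), sub_self, sub_sub_cancel,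
    integral_eq_massNearOne hx0 hxe]

lemma tendsto_massNearOne_mul_div {t : ℝ} (ht : 0 < t) :
    Tendsto (fun x => massNearOne (x * t) / massNearOne x) (𝓝[>] 0) (𝓝 1) := by
  refine (tendsto_div_add_const_of_tendsto_atTop tendsto_one_sub_log_nhdsGT_zero (-log t)).congr' ?_
  filter_upwards [self_mem_nhdsWithin] with x (hx : 0 < x)
  rw [massNearOne_of_pos (mul_pos hx ht), massNearOne_of_pos hx, log_mul hx.ne' ht.ne',
    div_div_div_cancel_left' _ _ pi_ne_zero]
  ring_nf

/-- For `r x = π/((1-x) log²((1-x)/e))` on `(0,1)`: `∫₀¹ r = π`, the boundary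
primitive `I₁⁻ x = ∫_{1-x}^1 r = π/(1 - log x)` is slowly varying at 0, hence not
positively increasing. -/
theorem stmt_12 :
    (∫ t in (0:ℝ)..1, Real.pi / ((1 - t) * (Real.log ((1 - t) / Real.exp 1)) ^ 2))
        = Real.pi ∧
    (∀ x ∈ Ioc (0:ℝ) 1,
      (∫ t in (1 - x)..(1:ℝ), Real.pi / ((1 - t) * (Real.log ((1 - t) / Real.exp 1)) ^ 2))
        = Real.pi / (1 - Real.log x)) ∧
    (∀ t ∈ Ioo (0:ℝ) 1,
      Tendsto
        (fun x => (∫ s in (1 - x * t)..(1:ℝ),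
            Real.pi / ((1 - s) * (Real.log ((1 - s) / Real.exp 1)) ^ 2)) /
          ∫ s in (1 - x)..(1:ℝ),
            Real.pi / ((1 - s) * (Real.log ((1 - s) / Real.exp 1)) ^ 2))
        (nhdsWithin 0 (Ioi 0)) (nhds 1)) ∧
    ¬ ∃ t ∈ Ioo (0:ℝ) 1,
      Filter.limsup
        (fun x => (∫ s in (1 - x * t)..(1:ℝ),
            Real.pi / ((1 - s) * (Real.log ((1 - s) / Real.exp 1)) ^ 2)) /
          ∫ s in (1 - x)..(1:ℝ),
            Real.pi / ((1 - s) * (Real.log ((1 - s) / Real.exp 1)) ^ 2))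
        (nhdsWithin 0 (Ioi 0)) < 1 := by
  have hI : ∀ x ∈ Icc (0 : ℝ) 1,
      ∫ t in (1 - x)..1, π / ((1 - t) * log ((1 - t) / exp 1) ^ 2) = massNearOne x :=
    fun x hx => integral_one_sub_eq_massNearOne hx.1 (hx.2.trans_lt (one_lt_exp_iff.mpr one_pos))
  have hratio : ∀ t ∈ Ioo (0 : ℝ) 1,
      Tendsto (fun x => (∫ s in (1 - x * t)..1, π / ((1 - s) * log ((1 - s) / exp 1) ^ 2)) /
        ∫ s in (1 - x)..1, π / ((1 - s) * log ((1 - s) / exp 1) ^ 2)) (𝓝[>] 0) (𝓝 1) := by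
    intro t ⟨ht0, ht1⟩
    refine (tendsto_massNearOne_mul_div ht0).congr' ?_
    filter_upwards [Ioc_mem_nhdsGT one_pos] with x ⟨hx0, hx1⟩
    rw [hI x ⟨hx0.le, hx1⟩, hI (x * t) ⟨by positivity, mul_le_one₀ hx1 ht0.le ht1.le⟩]
  refine ⟨?_, fun x hx => (hI x (Ioc_subset_Icc_self hx)).trans (massNearOne_of_pos hx.1),
    hratio, ?_⟩
  · simpa [massNearOne_of_pos one_pos] using hI 1 ⟨zero_le_one, le_rfl⟩
  · rintro ⟨t, ht, hlt⟩
    exact lt_irrefl 1 ((hratio t ht).limsup_eq ▸ hlt)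
end
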